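/- (Completeness of the LTS w.r.t. the abstract bundle semantics) Let C be a choreography and B ∈ ⟦C⟧. If B\[μ] is defined, then there exists a choreography C' with C —μ→ C'. -/

import Mathlib

/-- Choreography mini-language: `C ::= Σᵢ ρ1 → ρ2 : opᵢ⟨M̃ᵢ⟩. Cᵢ | 0`.
A `comm ρ1 ρ2 bs` is a finite nondeterministic sum of interactions from role
`ρ1` to role `ρ2`, each branch carrying an operation label, a message tuple,
and a continuation. -/
inductive Chor (R O M : Type) : Type where
  | zero : Chor R O M
  | comm : R → R → List (O × List M × Chor R O M) → Chor R O M

/-- Interaction labels `μ = (ρ1, ρ2, op, M̃)`. -/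
abbrev CLabel (R O M : Type) := R × R × O × List M

/-- LTS rule C-Com: a branch is selected nondeterministically. -/
inductive CStep {R O M : Type} : Chor R O M → CLabel R O M → Chor R O M → Prop where
  | comm {ρ1 ρ2 : R} {bs : List (O × List M × Chor R O M)} {op : O}
      {ms : List M} {c : Chor R O M} (h : (op, ms, c) ∈ bs) :
      CStep (Chor.comm ρ1 ρ2 bs) (ρ1, ρ2, op, ms) c

/-- Maximal LTS traces: sequences of transitions ending at `0`. -/
inductive MaxTrace {R O M : Type} : Chor R O M → List (CLabel R O M) → Prop where
  | nil : MaxTrace Chor.zero []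
  | cons {C C' : Chor R O M} {μ : CLabel R O M} {tr : List (CLabel R O M)} :
      CStep C μ C' → MaxTrace C' tr → MaxTrace C (μ :: tr)

/-- Nodes of abstract bundles: `Sum.inl (i, true)` / `Sum.inl (i, false)` are
the transmission / reception nodes of the `i`-th interaction, and `Sum.inr ρ`
is the terminal fresh event `e^ρ` of role `ρ`. -/
abbrev ANode (R : Type) := (ℕ × Bool) ⊕ R

/-- Abstract messages: an interaction message `op⟨M̃⟩` or a terminal event `e^ρ`. -/
abbrev AMsg (R O M : Type) := (O × List M) ⊕ R

/-- Abstract bundle environments `(B, who)`: a counter `k` of interactions so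
far, a node set, strand edges `⇒_B`, transmission edges `→_B`, the message of
each node, and the map `who` giving the first node of each role's strand. -/
structure AEnv (R O M : Type) where
  k : ℕ
  nodes : Set (ANode R)
  edgeS : ANode R → ANode R → Prop
  edgeM : ANode R → ANode R → Prop
  msg : ANode R → Option (AMsg R O M)
  who : R → ANode R

variable {R O M : Type}

/-- The prefixing operation `(B, who)[μ]`: a fresh transmission node is added
to the front of the sender's strand, a fresh matching reception node to the
front of the receiver's strand, joined by a transmission edge, and `who` is
updated accordingly. -/
def prefixApply [DecidableEq R] (E : AEnv R O M) (μ : CLabel R O M) : AEnv R O M :=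
  let n1 : ANode R := Sum.inl (E.k, true)
  let n2 : ANode R := Sum.inl (E.k, false)
  { k := E.k + 1
    nodes := insert n1 (insert n2 E.nodes)
    edgeS := fun a b =>
      E.edgeS a b ∨ (a = n1 ∧ b = E.who μ.1) ∨ (a = n2 ∧ b = E.who μ.2.1)
    edgeM := fun a b => E.edgeM a b ∨ (a = n1 ∧ b = n2)
    msg := fun n => if n = n1 ∨ n = n2 then some (Sum.inl (μ.2.2.1, μ.2.2.2))
      else E.msg n
    who := fun ρ => if ρ = μ.1 then n1 else if ρ = μ.2.1 then n2 else E.who ρ }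

/-- The bundle environment for `0`: one fresh terminal event `e^ρ` per role. -/
def zeroEnv : AEnv R O M where
  k := 0
  nodes := {n | ∃ ρ : R, n = Sum.inr ρ}
  edgeS := fun _ _ => False
  edgeM := fun _ _ => False
  msg := fun n => match n with
    | Sum.inr ρ => some (Sum.inr ρ)
    | Sum.inl _ => none
  who := fun ρ => Sum.inr ρ

mutual
/-- The abstract bundle semantics `⟦C⟧` (rules ABS-Zero and ABS-Com). -/
def absSem [DecidableEq R] : Chor R O M → Set (AEnv R O M)
  | Chor.zero => {zeroEnv}
  | Chor.comm ρ1 ρ2 bs => absSemList ρ1 ρ2 bs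

/-- Semantics of a sum of branches: the union over the branches of the
prefixed bundles of each continuation. -/
def absSemList [DecidableEq R] (ρ1 ρ2 : R) :
    List (O × List M × Chor R O M) → Set (AEnv R O M)
  | [] => ∅
  | (op, ms, c) :: rest =>
      (fun E => prefixApply E (ρ1, ρ2, op, ms)) '' absSem c ∪
        absSemList ρ1 ρ2 rest
end

/-- Well-formed choreographies: every sum `Σᵢ` ranges over a non-empty set of
branches (as in the grammar, a sum has at least one summand). -/
inductive NoEmptySum {R O M : Type} : Chor R O M → Prop where
  | zero : NoEmptySum Chor.zero
  | comm {ρ1 ρ2 : R} {bs : List (O × List M × Chor R O M)} (hne : bs ≠ [])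
      (hrec : ∀ b ∈ bs, NoEmptySum b.2.2) : NoEmptySum (Chor.comm ρ1 ρ2 bs)

/-!
Every bundle of `⟦C⟧` is well formed: its counter `k` is fresh (no strand head and no strand edge
starts at an interaction node of index `≥ k`) and distinct roles have distinct strand heads. For a
well-formed `E`, the label `ν` is determined by `E[ν]`: the sender is the role whose strand head is
the new transmission node, the receiver the one whose head is the new reception node (or, for a
self-communication, the target of the strand edge leaving it), and the message sits on both new
nodes. So if `B ∈ ⟦C⟧` equals `B₀[μ]`, then `C` is a sum and `B = E[ν]` for a branch with label
`ν` and `E` in the semantics of its continuation; hence `μ = ν` and that branch performs `μ`.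
-/

namespace AEnv

structure WellFormed (E : AEnv R O M) : Prop where
  who_lt : ∀ ρ j b, E.who ρ = Sum.inl (j, b) → j < E.k
  edgeS_lt : ∀ j b y, E.edgeS (Sum.inl (j, b)) y → j < E.k
  who_injective : Function.Injective E.who

theorem wellFormed_zeroEnv : (zeroEnv : AEnv R O M).WellFormed where
  who_lt := by simp [zeroEnv]
  edgeS_lt := by simp [zeroEnv]
  who_injective _ _ h := Sum.inr_injective h

namespace WellFormed

variable {E : AEnv R O M}

theorem who_ne (hE : E.WellFormed) (ρ : R) (b : Bool) : E.who ρ ≠ Sum.inl (E.k, b) :=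
  fun h => (hE.who_lt ρ _ _ h).false

theorem not_edgeS (hE : E.WellFormed) (b : Bool) (y : ANode R) :
    ¬ E.edgeS (Sum.inl (E.k, b)) y :=
  fun h => (hE.edgeS_lt _ _ y h).false

variable [DecidableEq R]

protected theorem prefixApply (hE : E.WellFormed) (μ : CLabel R O M) :
    (prefixApply E μ).WellFormed where
  who_lt ρ j b h := by
    simp only [_root_.prefixApply] at h ⊢
    split_ifs at h
    · cases h; omega
    · cases h; omega
    · exact Nat.lt_succ_of_lt (hE.who_lt ρ j b h)
  edgeS_lt j b y h := by
    simp only [_root_.prefixApply] at h ⊢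
    rcases h with h | ⟨h, -⟩ | ⟨h, -⟩
    · exact Nat.lt_succ_of_lt (hE.edgeS_lt j b y h)
    all_goals cases h; omega
  who_injective ρ σ h := by
    simp only [_root_.prefixApply] at h
    split_ifs at h <;>
      first
      | (subst_vars; rfl)
      | simp at h
      | exact (hE.who_ne _ _ h.symm).elim
      | exact (hE.who_ne _ _ h).elim
      | exact hE.who_injective h

theorem prefixApply_who_eq_true_iff (hE : E.WellFormed) {μ : CLabel R O M} {ρ : R} :
    (prefixApply E μ).who ρ = Sum.inl (E.k, true) ↔ ρ = μ.1 := by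
  simp only [_root_.prefixApply]
  split_ifs with h1 h2 <;> simp [h1, hE.who_ne]

theorem prefixApply_who_eq_false_iff (hE : E.WellFormed) {μ : CLabel R O M} {ρ : R} :
    (prefixApply E μ).who ρ = Sum.inl (E.k, false) ↔ ρ ≠ μ.1 ∧ ρ = μ.2.1 := by
  simp only [_root_.prefixApply]
  split_ifs with h1 h2
  · simp [h1]
  · exact iff_of_true rfl ⟨h1, h2⟩
  · simp [h1, h2, hE.who_ne]

theorem prefixApply_edgeS_true_iff (hE : E.WellFormed) {μ : CLabel R O M} {y : ANode R} :
    (prefixApply E μ).edgeS (Sum.inl (E.k, true)) y ↔ y = E.who μ.1 := by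
  simp [_root_.prefixApply, hE.not_edgeS]

theorem prefixApply_edgeS_false_iff (hE : E.WellFormed) {μ : CLabel R O M} {y : ANode R} :
    (prefixApply E μ).edgeS (Sum.inl (E.k, false)) y ↔ y = E.who μ.2.1 := by
  simp [_root_.prefixApply, hE.not_edgeS]

theorem label_eq_of_prefixApply_eq (hE : E.WellFormed) {B₀ : AEnv R O M} {μ ν : CLabel R O M}
    (h : prefixApply B₀ μ = prefixApply E ν) : μ = ν := by
  obtain ⟨a, b, o, m⟩ := μ
  obtain ⟨ρ1, ρ2, op, ms⟩ := ν
  have hk : B₀.k = E.k := Nat.succ_injective (congrArg AEnv.k h)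
  have hwho (ρ : R) := congrFun (congrArg AEnv.who h) ρ
  have hsender : a = ρ1 :=
    (hE.prefixApply_who_eq_true_iff (ρ := a)).1 (by rw [← hwho]; simp [_root_.prefixApply, hk])
  subst hsender
  have hreceiver : b = ρ2 := by
    by_cases hba : b = a
    · -- For a self-communication the strand heads do not reveal the receiver;
      -- it is read off the strand edges leaving the two new nodes instead.
      subst hba
      have hedge (x : Bool) (y : ANode R) :=
        congrFun (congrFun (congrArg AEnv.edgeS h) (.inl (E.k, x))) y
      have hsend : B₀.who b = E.who b := hE.prefixApply_edgeS_true_iff.1 <|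
        (hedge true _).mp (by simp [_root_.prefixApply, hk])
      have hrecv : B₀.who b = E.who ρ2 := hE.prefixApply_edgeS_false_iff.1 <|
        (hedge false _).mp (by simp [_root_.prefixApply, hk])
      exact hE.who_injective (hsend.symm.trans hrecv)
    · refine ((hE.prefixApply_who_eq_false_iff (μ := (a, ρ2, op, ms)) (ρ := b)).1 ?_).2
      rw [← hwho]
      simp [_root_.prefixApply, hk, hba]
  subst hreceiver
  obtain ⟨rfl, rfl⟩ : o = op ∧ m = ms := by
    simpa [_root_.prefixApply, hk] using congrFun (congrArg AEnv.msg h) (.inl (E.k, true))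
  rfl

end WellFormed

end AEnv

theorem mem_absSemList [DecidableEq R] {ρ1 ρ2 : R} {bs : List (O × List M × Chor R O M)}
    {E : AEnv R O M} :
    E ∈ absSemList ρ1 ρ2 bs ↔
      ∃ b ∈ bs, ∃ E' ∈ absSem b.2.2, E = prefixApply E' (ρ1, ρ2, b.1, b.2.1) := by
  induction bs with
  | nil => simp [absSemList]
  | cons b bs ih =>
    obtain ⟨op, ms, c⟩ := b
    simp only [absSemList, Set.mem_union, Set.mem_image, ih, List.mem_cons, eq_comm (a := E)]
    aesop

theorem wellFormed_of_mem_absSem [DecidableEq R] :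
    ∀ {C : Chor R O M} {E : AEnv R O M}, E ∈ absSem C → E.WellFormed
  | .zero, E, hE => by
    rw [absSem, Set.mem_singleton_iff] at hE
    exact hE ▸ AEnv.wellFormed_zeroEnv
  | .comm ρ1 ρ2 bs, E, hE => by
    obtain ⟨⟨op, ms, c⟩, hb, E', hE', rfl⟩ := mem_absSemList.1 (by rwa [absSem] at hE)
    exact (wellFormed_of_mem_absSem hE').prefixApply _
termination_by C => C
decreasing_by
  have := List.sizeOf_lt_of_mem hb
  simp_all only [Chor.comm.sizeOf_spec, Prod.mk.sizeOf_spec]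
  omega

/-- Completeness of the LTS w.r.t. the abstract bundle semantics
(Theorem 1(2)): if `B ∈ ⟦C⟧` and `B\[μ]` is defined (i.e. `B` arises from some
bundle `B₀` by prefixing with `μ`), then `C` can make the transition `μ`. -/
theorem lts_complete_absSem [DecidableEq R] {C : Chor R O M}
    {μ : CLabel R O M} {B : AEnv R O M}
    (hB : B ∈ absSem C) (hdef : ∃ B₀ : AEnv R O M, B = prefixApply B₀ μ) :
    ∃ C' : Chor R O M, CStep C μ C' := by
  obtain ⟨B₀, rfl⟩ := hdef
  cases C with
  | zero =>
    rw [absSem, Set.mem_singleton_iff] at hB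
    exact absurd (congrArg AEnv.k hB) (by simp [zeroEnv, prefixApply])
  | comm ρ1 ρ2 bs =>
    obtain ⟨⟨op, ms, c⟩, hb, E, hE, hBE⟩ := mem_absSemList.1 (by rwa [absSem] at hB)
    obtain rfl := (wellFormed_of_mem_absSem hE).label_eq_of_prefixApply_eq hBE
    exact ⟨c, CStep.comm hb⟩
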